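/- arXiv:0704.2873 — 4 statements merged into one kernel-verified Lean document; each statement's English description precedes it below -/
import Mathlib

section
/- The transformation tr₂(q,p) = (−p/t, tq) is symplectic (preserves the canonical 2-form dq∧dp for fixed t), and it transforms the Hamiltonian H₂(q,p,t;α,β) = (q²p² − tq²p + αqp + βtq)/t into (Q²P² + QP² − (α+1)QP + βP)/t up to addition of a function of t only, where (Q,P) = tr₂(q,p); equivalently, under the change of variables Q = −p/t, P = tq, solutions of the Hamiltonian system for H₂ are mapped to solutions of the Hamiltonian system for K₂(Q,P,t) = (Q²P² + QP² − (α+1)QP + βP)/t. -/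
/-- The transformation `tr₂(q,p) = (−p/t, tq)` is symplectic (its Jacobian determinant
is `1` for fixed `t ≠ 0`), and it maps solutions of the Hamiltonian system for
`H₂(q,p,t;α,β) = (q²p² − tq²p + αqp + βtq)/t` to solutions of the Hamiltonian system
for `K₂(Q,P,t) = (Q²P² + QP² − (α+1)QP + βP)/t`. -/
theorem stmt2 (α β : ℝ) :
    (∀ t : ℝ, t ≠ 0 → ∀ v : Fin 2 → ℝ,
      (Matrix.of fun i j =>
        fderiv ℝ (fun u : Fin 2 → ℝ => ![-(u 1)/t, t * u 0] i) v (Pi.single j 1)).det = 1) ∧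
    (∀ q p : ℝ → ℝ,
      (∀ t : ℝ, t ≠ 0 →
        HasDerivAt q ((2*(q t)^2*(p t) - t*(q t)^2 + α*(q t))/t) t) →
      (∀ t : ℝ, t ≠ 0 →
        HasDerivAt p (-((2*(q t)*(p t)^2 - 2*t*(q t)*(p t) + α*(p t) + β*t)/t)) t) →
      ∀ t : ℝ, t ≠ 0 →
        HasDerivAt (fun s => -(p s)/s)
          ((2*(-(p t)/t)^2*(t*(q t)) + 2*(-(p t)/t)*(t*(q t)) - (α+1)*(-(p t)/t) + β)/t) t ∧
        HasDerivAt (fun s => s * q s)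
          (-((2*(-(p t)/t)*(t*(q t))^2 + (t*(q t))^2 - (α+1)*(t*(q t)))/t)) t) := by
  constructor
  · intro t ht v
    have c0 : (fun u : Fin 2 → ℝ => ![-(u 1)/t, t * u 0] 0) =
        ⇑((-(1:ℝ)/t) • (ContinuousLinearMap.proj 1 : (Fin 2 → ℝ) →L[ℝ] ℝ)) := by
      funext u; simp; ring
    have c1 : (fun u : Fin 2 → ℝ => ![-(u 1)/t, t * u 0] 1) =
        ⇑(t • (ContinuousLinearMap.proj 0 : (Fin 2 → ℝ) →L[ℝ] ℝ)) := by
      funext u; simp [mul_comm]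
    have f0 : ∀ j, fderiv ℝ (fun u : Fin 2 → ℝ => ![-(u 1)/t, t * u 0] 0) v (Pi.single j 1)
        = (-(1:ℝ)/t) * (Pi.single j 1 : Fin 2 → ℝ) 1 := by
      intro j
      rw [c0, ContinuousLinearMap.fderiv]
      simp
    have f1 : ∀ j, fderiv ℝ (fun u : Fin 2 → ℝ => ![-(u 1)/t, t * u 0] 1) v (Pi.single j 1)
        = t * (Pi.single j 1 : Fin 2 → ℝ) 0 := by
      intro j
      rw [c1, ContinuousLinearMap.fderiv]
      simp
    rw [Matrix.det_fin_two]
    simp only [Matrix.of_apply, f0, f1]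
    simp [Pi.single_apply]
    field_simp
  · intro q p hq hp t ht
    have hq' := hq t ht
    have hp' := hp t ht
    constructor
    · have h : HasDerivAt (fun s => -(p s)/s)
          ((-(-((2*(q t)*(p t)^2 - 2*t*(q t)*(p t) + α*(p t) + β*t)/t)) * t - (-(p t)) * 1)
            / t^2) t := (hp'.neg.div (hasDerivAt_id t) ht)
      convert h using 1
      field_simp
      ring
    · have h : HasDerivAt (fun s => s * q s)
          (1 * q t + t * ((2*(q t)^2*(p t) - t*(q t)^2 + α*(q t))/t)) t :=
        (hasDerivAt_id t).mul hq'
      convert h using 1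
      field_simp
      ring
end

section
/- The function I₃(q,p) = q²p² + αqp + q is a first integral of the Hamiltonian system with Hamiltonian H₃(q,p,t) = (q²p² + αqp + q)/(2t), and 2tH₃ = I₃. -/
/-- `I₃(q,p) = q²p² + αqp + q` is a first integral of the Hamiltonian system with
Hamiltonian `H₃(q,p,t) = (q²p² + αqp + q)/(2t)`, and `2t·H₃ = I₃`. -/
theorem stmt3 (α : ℝ) (q p : ℝ → ℝ)
    (hq : ∀ t : ℝ, t ≠ 0 →
      HasDerivAt q ((2*(q t)^2*(p t) + α*(q t))/(2*t)) t)
    (hp : ∀ t : ℝ, t ≠ 0 →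
      HasDerivAt p (-((2*(q t)*(p t)^2 + α*(p t) + 1)/(2*t))) t) :
    (∀ t : ℝ, t ≠ 0 →
      HasDerivAt (fun s => (q s)^2*(p s)^2 + α*(q s)*(p s) + q s) 0 t) ∧
    (∀ Q P t : ℝ, t ≠ 0 →
      2*t*((Q^2*P^2 + α*Q*P + Q)/(2*t)) = Q^2*P^2 + α*Q*P + Q) := by
  constructor
  · intro t ht
    have hq' := hq t ht
    have hp' := hp t ht
    have h := (((hq'.pow 2).mul (hp'.pow 2)).add
      (((hq'.const_mul α).mul hp'))).add hq'
    refine h.congr_deriv ?_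
    simp only [Pi.pow_apply]
    field_simp
    ring
  · intro Q P t ht
    field_simp
end

section
/- The system of six ODEs (41) of type D₅⁽²⁾ is Hamiltonian with Hamiltonian H = (x²y² + 2α₀xy + x)/(2t) + (z²w² + 2(α₀+α₁+α₂)zw)/(2t) + (q²p² + 2(α₄−1)qp − tq)/(2t) + yz(zw+α₂)/t − (y+w)p/t; that is, the right-hand sides of the six equations equal ∂H/∂y, −∂H/∂x, ∂H/∂w, −∂H/∂z, ∂H/∂p, −∂H/∂q respectively. -/
/-- The Hamiltonian of the `D₅⁽²⁾` system. -/
noncomputable def HD5 (a0 a1 a2 a4 : ℝ) (x y z w q p t : ℝ) : ℝ :=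
  (x^2*y^2 + 2*a0*x*y + x)/(2*t) + (z^2*w^2 + 2*(a0+a1+a2)*z*w)/(2*t)
  + (q^2*p^2 + 2*(a4-1)*q*p - t*q)/(2*t) + y*z*(z*w+a2)/t - (y+w)*p/t


private lemma quadDeriv (a b c v : ℝ) :
    HasDerivAt (fun X : ℝ => a*X^2 + b*X + c) (2*a*v + b) v := by
  have h1 : HasDerivAt (fun X : ℝ => X^2) (2*v) v := by
    simpa using hasDerivAt_pow 2 v
  have := ((h1.const_mul a).add ((hasDerivAt_id v).const_mul b)).add_const c
  simpa [mul_comm, mul_assoc, mul_left_comm] using this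

set_option maxHeartbeats 1600000 in
/-- The system (41) of type `D₅⁽²⁾` is Hamiltonian with Hamiltonian `HD5`:
the right-hand sides of its six equations equal
`∂H/∂y, −∂H/∂x, ∂H/∂w, −∂H/∂z, ∂H/∂p, −∂H/∂q` respectively. -/
theorem stmt9 (a0 a1 a2 a3 a4 : ℝ) (hrel : a0 + a1 + a2 + a3 + a4 = 1)
    (x y z w q p t : ℝ) (ht : t ≠ 0) :
    HasDerivAt (fun Y => HD5 a0 a1 a2 a4 x Y z w q p t)
      ((x^2*y + z^2*w + a0*x + a2*z - p)/t) y ∧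
    HasDerivAt (fun X => HD5 a0 a1 a2 a4 X y z w q p t)
      (-((-2*x*y^2 - 2*a0*y - 1)/(2*t))) x ∧
    HasDerivAt (fun W => HD5 a0 a1 a2 a4 x y z W q p t)
      ((z^2*w + y*z^2 + (a0+a1+a2)*z - p)/t) w ∧
    HasDerivAt (fun Z => HD5 a0 a1 a2 a4 x y Z w q p t)
      (-((-z*w^2 - 2*y*z*w - a2*y - (a0+a1+a2)*w)/t)) z ∧
    HasDerivAt (fun P => HD5 a0 a1 a2 a4 x y z w q P t)
      ((q^2*p - y - w + (a4-1)*q)/t) p ∧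
    HasDerivAt (fun Q => HD5 a0 a1 a2 a4 x y z w Q p t)
      (-((-2*q*p^2 - 2*(a4-1)*p + t)/(2*t))) q := by
  refine ⟨?_, ?_, ?_, ?_, ?_, ?_⟩
  · have e : (fun Y => HD5 a0 a1 a2 a4 x Y z w q p t)
        = fun Y => (x^2/(2*t))*Y^2 + (a0*x/t + z*(z*w+a2)/t - p/t)*Y + HD5 a0 a1 a2 a4 x 0 z w q p t := by
      funext Y; simp only [HD5]; field_simp; ring
    rw [e]
    convert quadDeriv (x^2/(2*t)) (a0*x/t + z*(z*w+a2)/t - p/t) (HD5 a0 a1 a2 a4 x 0 z w q p t) y using 1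
    field_simp; ring
  · have e : (fun X => HD5 a0 a1 a2 a4 X y z w q p t)
        = fun X => (y^2/(2*t))*X^2 + ((2*a0*y+1)/(2*t))*X + HD5 a0 a1 a2 a4 0 y z w q p t := by
      funext X; simp only [HD5]; field_simp; ring
    rw [e]
    convert quadDeriv (y^2/(2*t)) ((2*a0*y+1)/(2*t)) (HD5 a0 a1 a2 a4 0 y z w q p t) x using 1
    field_simp; ring
  · have e : (fun W => HD5 a0 a1 a2 a4 x y z W q p t)
        = fun W => (z^2/(2*t))*W^2 + ((a0+a1+a2)*z/t + y*z^2/t - p/t)*W + HD5 a0 a1 a2 a4 x y z 0 q p t := by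
      funext W; simp only [HD5]; field_simp; ring
    rw [e]
    convert quadDeriv (z^2/(2*t)) ((a0+a1+a2)*z/t + y*z^2/t - p/t) (HD5 a0 a1 a2 a4 x y z 0 q p t) w using 1
    field_simp; ring
  · have e : (fun Z => HD5 a0 a1 a2 a4 x y Z w q p t)
        = fun Z => (w^2/(2*t) + y*w/t)*Z^2 + ((a0+a1+a2)*w/t + y*a2/t)*Z + HD5 a0 a1 a2 a4 x y 0 w q p t := by
      funext Z; simp only [HD5]; field_simp; ring
    rw [e]
    convert quadDeriv (w^2/(2*t) + y*w/t) ((a0+a1+a2)*w/t + y*a2/t) (HD5 a0 a1 a2 a4 x y 0 w q p t) z using 1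
    field_simp; ring
  · have e : (fun P => HD5 a0 a1 a2 a4 x y z w q P t)
        = fun P => (q^2/(2*t))*P^2 + ((a4-1)*q/t - (y+w)/t)*P + HD5 a0 a1 a2 a4 x y z w q 0 t := by
      funext P; simp only [HD5]; field_simp; ring
    rw [e]
    convert quadDeriv (q^2/(2*t)) ((a4-1)*q/t - (y+w)/t) (HD5 a0 a1 a2 a4 x y z w q 0 t) p using 1
    field_simp; ring
  · have e : (fun Q => HD5 a0 a1 a2 a4 x y z w Q p t)
        = fun Q => (p^2/(2*t))*Q^2 + ((a4-1)*p/t - 1/2)*Q + HD5 a0 a1 a2 a4 x y z w 0 p t := by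
      funext Q; simp only [HD5]; field_simp; ring
    rw [e]
    convert quadDeriv (p^2/(2*t)) ((a4-1)*p/t - 1/2) (HD5 a0 a1 a2 a4 x y z w 0 p t) q using 1
    field_simp; ring
end

section
/- The birational transformation (X,Y,Z,W,Q,P) = (((x−z)y − α₁)y, −1/y, z, w + y, q, p) is symplectic: for fixed t, dX∧dY + dZ∧dW + dQ∧dP = dx∧dy + dz∧dw + dq∧dp wherever y ≠ 0. -/
private lemma cv0 {α : Type*} (a b c d e f : α) : ![a,b,c,d,e,f] 0 = a := rfl
private lemma cv1 {α : Type*} (a b c d e f : α) : ![a,b,c,d,e,f] 1 = b := rfl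
private lemma cv2 {α : Type*} (a b c d e f : α) : ![a,b,c,d,e,f] 2 = c := rfl
private lemma cv3 {α : Type*} (a b c d e f : α) : ![a,b,c,d,e,f] 3 = d := rfl
private lemma cv4 {α : Type*} (a b c d e f : α) : ![a,b,c,d,e,f] 4 = e := rfl
private lemma cv5 {α : Type*} (a b c d e f : α) : ![a,b,c,d,e,f] 5 = f := rfl

set_option maxHeartbeats 2000000 in
private lemma symp (x a : ℝ) (hx : x ≠ 0) :
    Matrix.transpose !![x * x, a, -(x * x), 0, 0, 0;
         0, (x^2)⁻¹, 0, 0, 0, 0;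
         0, 0, 1, 0, 0, 0;
         0, 1, 0, 1, 0, 0;
         0, 0, 0, 0, 1, 0;
         0, 0, 0, 0, 0, 1] *
      !![0,1,0,0,0,0; -1,0,0,0,0,0; 0,0,0,1,0,0; 0,0,-1,0,0,0; 0,0,0,0,0,1; 0,0,0,0,-1,0] *
      !![x * x, a, -(x * x), 0, 0, 0;
         0, (x^2)⁻¹, 0, 0, 0, 0;
         0, 0, 1, 0, 0, 0;
         0, 1, 0, 1, 0, 0;
         0, 0, 0, 0, 1, 0;
         0, 0, 0, 0, 0, 1] =
      !![0,1,0,0,0,0; -1,0,0,0,0,0; 0,0,0,1,0,0; 0,0,-1,0,0,0; 0,0,0,0,0,1; 0,0,0,0,-1,0] := by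
  ext i j
  fin_cases i <;> fin_cases j <;>
    · simp only [Matrix.mul_apply, Fin.sum_univ_six, Matrix.transpose_apply, Matrix.of_apply,
        cv0, cv1, cv2, cv3, cv4, cv5, Fin.isValue, Fin.reduceFinMk, Fin.zero_eta, Fin.mk_one]
      field_simp
      try ring

/-- The birational transformation
`(X,Y,Z,W,Q,P) = (((x−z)y − α₁)y, −1/y, z, w + y, q, p)` is symplectic:
its Jacobian `J` satisfies `Jᵀ Ω J = Ω` (equivalently it preserves
`dx∧dy + dz∧dw + dq∧dp`) wherever `y ≠ 0`. -/
theorem stmt16 (a1 : ℝ) (v : Fin 6 → ℝ) (hy : v 1 ≠ 0) :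
    Matrix.transpose (Matrix.of fun i j =>
        fderiv ℝ (fun u : Fin 6 → ℝ =>
          ![((u 0 - u 2) * u 1 - a1) * u 1, -1 / u 1, u 2, u 3 + u 1, u 4, u 5] i)
          v (Pi.single j 1)) *
      !![0,1,0,0,0,0; -1,0,0,0,0,0; 0,0,0,1,0,0; 0,0,-1,0,0,0; 0,0,0,0,0,1; 0,0,0,0,-1,0] *
      (Matrix.of fun i j =>
        fderiv ℝ (fun u : Fin 6 → ℝ =>
          ![((u 0 - u 2) * u 1 - a1) * u 1, -1 / u 1, u 2, u 3 + u 1, u 4, u 5] i)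
          v (Pi.single j 1)) =
      !![0,1,0,0,0,0; -1,0,0,0,0,0; 0,0,0,1,0,0; 0,0,-1,0,0,0; 0,0,0,0,0,1; 0,0,0,0,-1,0] := by
  have P : ∀ k : Fin 6, HasFDerivAt (fun u : Fin 6 → ℝ => u k)
      (ContinuousLinearMap.proj k : (Fin 6 → ℝ) →L[ℝ] ℝ) v := fun k => hasFDerivAt_apply k v
  have e0 : fderiv ℝ (fun u : Fin 6 → ℝ => ((u 0 - u 2) * u 1 - a1) * u 1) v = _ := (((((P 0).sub (P 2)).mul (P 1)).sub_const a1).mul (P 1)).fderiv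
  have hd : HasDerivAt (fun t : ℝ => -1 / t) (((v 1)^2)⁻¹) (v 1) := by
    simpa [neg_div, one_div, Pi.neg_def] using (hasDerivAt_inv hy).neg
  have e1 : fderiv ℝ (fun u : Fin 6 → ℝ => -1 / u 1) v
      = ((v 1)^2)⁻¹ • (ContinuousLinearMap.proj 1 : (Fin 6 → ℝ) →L[ℝ] ℝ) := by
    simpa [Function.comp_def] using (hd.comp_hasFDerivAt v (P 1)).fderiv
  have e1' : fderiv ℝ (fun u : Fin 6 → ℝ => -(u 1)⁻¹) v
      = ((v 1)^2)⁻¹ • (ContinuousLinearMap.proj 1 : (Fin 6 → ℝ) →L[ℝ] ℝ) := by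
    rw [← e1]; congr 1; funext u; rw [neg_div, one_div]
  have e2 := (P 2).fderiv
  have e3 : fderiv ℝ (fun u : Fin 6 → ℝ => u 3 + u 1) v = _ := ((P 3).add (P 1)).fderiv
  have e4 := (P 4).fderiv
  have e5 := (P 5).fderiv
  have hJ : (Matrix.of fun i j =>
        fderiv ℝ (fun u : Fin 6 → ℝ =>
          ![((u 0 - u 2) * u 1 - a1) * u 1, -1 / u 1, u 2, u 3 + u 1, u 4, u 5] i)
          v (Pi.single j 1)) =
      !![v 1 * v 1, (v 0 - v 2) * v 1 - a1 + v 1 * (v 0 - v 2), -(v 1 * v 1), 0, 0, 0;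
         0, ((v 1)^2)⁻¹, 0, 0, 0, 0;
         0, 0, 1, 0, 0, 0;
         0, 1, 0, 1, 0, 0;
         0, 0, 0, 0, 1, 0;
         0, 0, 0, 0, 0, 1] := by
    ext i j
    fin_cases i <;> fin_cases j <;>
      · simp [cv0, cv1, cv2, cv3, cv4, cv5, e0, e1, e1', e2, e3, e4, e5, Pi.single_apply]
        try rfl
        try ring
  rw [hJ]
  exact symp (v 1) _ hy
end
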